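/- arXiv:1703.05097 — 5 statements merged into one kernel-verified Lean document; each statement's English description precedes it below -/
import Mathlib

section
/- In a rooted phylogenetic network N on a finite set X, for every nonempty subset Y of X, the set of stable ancestors of Y is nonempty and contains a unique element lsa(Y) that is below every stable ancestor of Y (the lowest stable ancestor of Y). -/
open Relation

/-- A rooted phylogenetic network on a finite taxa set `X` with vertex type `V`:
a finite simple acyclic digraph with a unique root (indegree 0, reaching every
vertex), no vertices with indegree 1 and outdegree 1, whose leaves (outdegree-0
vertices) are bijectively labelled by `X`. -/
structure PhyloNetwork (V X : Type) [Fintype V] [Fintype X] where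
  /-- arc relation of the digraph -/
  Adj : V → V → Prop
  /-- acyclicity: no directed cycle -/
  acyclic : ∀ v, ¬ Relation.TransGen Adj v v
  /-- the root -/
  root : V
  /-- the root has indegree 0 -/
  root_no_parent : ∀ u, ¬ Adj u root
  /-- every vertex is reachable from the root by a directed path -/
  root_reaches : ∀ v, Relation.ReflTransGen Adj root v
  /-- no vertex has indegree 1 and outdegree 1 -/
  no_degenerate : ∀ v, ¬ ({u | Adj u v}.ncard = 1 ∧ {u | Adj v u}.ncard = 1)
  /-- the leaves are bijectively labelled by the taxa in `X` -/
  label : X ≃ {v : V // ∀ u, ¬ Adj v u}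

namespace PhyloNetwork

variable {V X : Type} [Fintype V] [Fintype X] (N : PhyloNetwork V X)

/-- a leaf is a vertex of outdegree 0 -/
def IsLeaf (v : V) : Prop := ∀ u, ¬ N.Adj v u

/-- the leaf labelled by taxon `x` -/
def leaf (x : X) : V := (N.label x).val

/-- `u` is below `v` (equivalently, `v` is above `u`): there is a directed
path from `v` to `u` -/
def below (u v : V) : Prop := Relation.ReflTransGen N.Adj v u

/-- `u` is strictly below `v` -/
def strictlyBelow (u v : V) : Prop := N.below u v ∧ u ≠ v

/-- the cluster of a vertex: the set of taxa labelling the leaves below it -/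
def cluster (v : V) : Set X := {x | N.below (N.leaf x) v}

/-- a common ancestor of a set `Y` of taxa -/
def CommonAncestor (Y : Set X) (v : V) : Prop := Y ⊆ N.cluster v

/-- a lowest common ancestor (LCA) of `Y`: a common ancestor of `Y` such that
no other common ancestor of `Y` is strictly below it -/
def IsLCA (Y : Set X) (v : V) : Prop :=
  N.CommonAncestor Y v ∧ ∀ u, N.CommonAncestor Y u → ¬ N.strictlyBelow u v

/-- `p` is a directed path from `u` to `v`, recorded as its list of vertices -/
def IsDipath (p : List V) (u v : V) : Prop :=
  p ≠ [] ∧ p.head? = some u ∧ p.getLast? = some v ∧ p.Chain' N.Adj ∧ p.Nodup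

/-- the arc `(a, b)` is traversed by the path `p` -/
def ArcIn (p : List V) (a b : V) : Prop := (a, b) ∈ p.zip p.tail

/-- a stable ancestor of `Y`: a vertex contained in every directed path from
the root to some taxon in `Y` -/
def StableAncestor (Y : Set X) (v : V) : Prop :=
  ∀ x ∈ Y, ∀ p : List V, N.IsDipath p N.root (N.leaf x) → v ∈ p

/-- the lowest stable ancestor (LSA) of `Y`: the stable ancestor of `Y`
that is below every stable ancestor of `Y` -/
def IsLSA (Y : Set X) (w : V) : Prop :=
  N.StableAncestor Y w ∧ ∀ v, N.StableAncestor Y v → N.below w v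

/-- the underlying undirected graph of the network -/
def underlying : SimpleGraph V := SimpleGraph.fromRel N.Adj

/-- indegree of a vertex -/
noncomputable def inDeg (v : V) : ℕ := {u | N.Adj u v}.ncard

/-- outdegree of a vertex -/
noncomputable def outDeg (v : V) : ℕ := {u | N.Adj v u}.ncard

/-- binary network: every non-leaf vertex has indegree at most 2 and
outdegree at most 2, and every vertex of indegree 2 has outdegree 1 -/
def Binary : Prop :=
  (∀ v, ¬ N.IsLeaf v → N.inDeg v ≤ 2 ∧ N.outDeg v ≤ 2) ∧
  (∀ v, N.inDeg v = 2 → N.outDeg v = 1)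

/-- level-1 network: binary, and any two cycles of the underlying undirected
graph are vertex-disjoint (i.e. any two cycles sharing a vertex have the same
vertex set) -/
def Level1 : Prop :=
  N.Binary ∧ ∀ (u v : V) (c₁ : N.underlying.Walk u u) (c₂ : N.underlying.Walk v v),
    c₁.IsCycle → c₂.IsCycle → ∀ w, w ∈ c₁.support → w ∈ c₂.support →
      ∀ z, (z ∈ c₁.support ↔ z ∈ c₂.support)

/-- a cut arc: an arc whose removal disconnects the underlying undirected graph -/
def CutArc (a b : V) : Prop :=
  N.Adj a b ∧ ¬ (SimpleGraph.fromRel (fun u v => N.Adj u v ∧ ¬ (u = a ∧ v = b))).Connected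

/-- a splitting ancestor of distinct taxa `x` and `y`: a (non-leaf) vertex such
that precisely one taxon from `{x, y}` is below both of its children, while the
other taxon is below exactly one of its two children -/
def SplittingAncestor (x y : X) (v : V) : Prop :=
  ∃ c₁ c₂, c₁ ≠ c₂ ∧ N.Adj v c₁ ∧ N.Adj v c₂ ∧
    ((N.below (N.leaf x) c₁ ∧ N.below (N.leaf x) c₂ ∧
        Xor' (N.below (N.leaf y) c₁) (N.below (N.leaf y) c₂)) ∨
     (N.below (N.leaf y) c₁ ∧ N.below (N.leaf y) c₂ ∧
        Xor' (N.below (N.leaf x) c₁) (N.below (N.leaf x) c₂)))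

/-- saturated level-1 network: each non-leaf vertex is contained in a cycle of
size three of the underlying undirected graph -/
def Saturated : Prop :=
  ∀ v, ¬ N.IsLeaf v → ∃ c : N.underlying.Walk v v, c.IsCycle ∧ c.length = 3

/-- the multiset of clusters induced by the vertices of the network -/
noncomputable def clusterMultiset : Multiset (Set X) :=
  (Finset.univ : Finset V).val.map N.cluster

/-- the Robinson–Foulds distance: the size of the symmetric difference of the
multisets of clusters of the two networks -/
noncomputable def rfDist {V V' X : Type} [Fintype V] [Fintype V'] [Fintype X]
    (N : PhyloNetwork V X) (N' : PhyloNetwork V' X) : ℕ :=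
  letI : DecidableEq (Set X) := Classical.decEq _
  ((N.clusterMultiset - N'.clusterMultiset) +
    (N'.clusterMultiset - N.clusterMultiset)).card

end PhyloNetwork

/-!
The root is a stable ancestor of `Y`, since every path from the root starts there. All stable
ancestors of `Y` lie on one fixed path from the root to a leaf labelled by a taxon of `Y`, so they
are pairwise comparable. Acyclicity makes "strictly below" well founded on the finite vertex set,
and a minimal stable ancestor is then below every other one; it is unique because `below` is
antisymmetric in an acyclic digraph.
-/

lemma List.IsChain.pairwise_transGen {α : Type*} {r : α → α → Prop} {l : List α}
    (h : l.IsChain r) : l.Pairwise (TransGen r) :=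
  List.isChain_iff_pairwise.mp (h.imp fun _ _ => TransGen.single)

namespace PhyloNetwork

variable {V X : Type} [Fintype V] [Fintype X] (N : PhyloNetwork V X)

lemma below_antisymm {u v : V} (huv : N.below u v) (hvu : N.below v u) : u = v := by
  rcases reflTransGen_iff_eq_or_transGen.mp huv with h | huv
  · exact h
  rcases reflTransGen_iff_eq_or_transGen.mp hvu with h | hvu
  · exact h.symm
  exact absurd (huv.trans hvu) (N.acyclic v)

lemma wellFounded_swap_transGen_adj : WellFounded (Function.swap (TransGen N.Adj)) :=
  haveI : IsTrans V (Function.swap (TransGen N.Adj)) := ⟨fun _ _ _ hab hbc => hbc.trans hab⟩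
  haveI : Std.Irrefl (Function.swap (TransGen N.Adj)) := ⟨N.acyclic⟩
  Finite.wellFounded_of_trans_of_irrefl _

lemma exists_dipath_from_root (v : V) : ∃ p, N.IsDipath p N.root v := by
  obtain ⟨l, hchain, hlast⟩ := List.exists_isChain_cons_of_relationReflTransGen (N.root_reaches v)
  refine ⟨N.root :: l, List.cons_ne_nil _ _, rfl, ?_, hchain, ?_⟩
  · rw [List.getLast?_eq_some_getLast (List.cons_ne_nil _ _), hlast]
  · refine hchain.pairwise_transGen.imp fun h => ?_
    rintro rfl
    exact N.acyclic _ h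

lemma below_or_below_of_mem_chain {p : List V} (hp : p.IsChain N.Adj) {u v : V}
    (hu : u ∈ p) (hv : v ∈ p) : N.below u v ∨ N.below v u := by
  have hpw : p.Pairwise fun a b => N.below b a := hp.pairwise_transGen.imp
    TransGen.to_reflTransGen
  exact List.Pairwise.forall_of_forall_of_flip (R := fun a b => N.below a b ∨ N.below b a)
    (fun _ _ => Or.inl ReflTransGen.refl) (hpw.imp Or.inr) (hpw.imp Or.inl) hu hv

lemma stableAncestor_root (Y : Set X) : N.StableAncestor Y N.root := by
  rintro x - (_ | ⟨a, p⟩) ⟨hne, hhead, -⟩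
  · exact absurd rfl hne
  · cases hhead
    exact List.mem_cons_self

lemma StableAncestor.below_or_below {N : PhyloNetwork V X} {Y : Set X} (hY : Y.Nonempty)
    {u v : V} (hu : N.StableAncestor Y u) (hv : N.StableAncestor Y v) :
    N.below u v ∨ N.below v u := by
  obtain ⟨x, hx⟩ := hY
  obtain ⟨p, hp⟩ := N.exists_dipath_from_root (N.leaf x)
  exact N.below_or_below_of_mem_chain hp.2.2.2.1 (hu x hx p hp) (hv x hx p hp)

lemma exists_isLSA {Y : Set X} (hY : Y.Nonempty) : ∃ w, N.IsLSA Y w := by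
  obtain ⟨w, hw, hmin⟩ := N.wellFounded_swap_transGen_adj.has_min {v | N.StableAncestor Y v}
    ⟨N.root, N.stableAncestor_root Y⟩
  refine ⟨w, hw, fun v hv => ?_⟩
  rcases hw.below_or_below hY hv with hwv | hvw
  · exact hwv
  rcases reflTransGen_iff_eq_or_transGen.mp hvw with rfl | hvw
  · exact ReflTransGen.refl
  · exact absurd hvw (hmin v hv)

lemma IsLSA.unique {N : PhyloNetwork V X} {Y : Set X} {w w' : V} (hw : N.IsLSA Y w)
    (hw' : N.IsLSA Y w') : w = w' :=
  N.below_antisymm (hw.2 w' hw'.1) (hw'.2 w hw.1)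

end PhyloNetwork

/-- In a rooted phylogenetic network `N` on a finite set `X`, for
every nonempty subset `Y` of `X`, the set of stable ancestors of `Y` is
nonempty and contains a unique element `lsa(Y)` that is below every stable
ancestor of `Y`. -/
theorem lsa_exists_unique {V X : Type} [Fintype V] [Fintype X]
    (N : PhyloNetwork V X) (Y : Set X) (hY : Y.Nonempty) :
    {v | N.StableAncestor Y v}.Nonempty ∧ ∃! w, N.IsLSA Y w :=
  ⟨⟨N.root, N.stableAncestor_root Y⟩,
    existsUnique_of_exists_of_unique (N.exists_isLSA hY) fun _ _ => PhyloNetwork.IsLSA.unique⟩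
end

section
/- In a level-1 phylogenetic network N on a finite set X, every nonempty subset Y of X has exactly one lowest common ancestor. -/
open Relation

/-!
Existence follows from finiteness and acyclicity. Two distinct LCAs `u`, `v` of `Y` are
incomparable. Take a minimal vertex `r` above both. For any maximal vertex `d` below both, directed
paths `r → u → d` and `r → v → d` meet only in `r` and `d`, so together they form a cycle through
`r` each of whose vertices lies between `u` or `v` and `r`, or between `d` and `u` or `v`. In a
level-1 network all cycles through `r` have the same vertices, so any other maximal vertex `e`
below `u` and `v` lies on this cycle, which forces `e = d`. Every taxon of `Y` lies below some
maximal vertex below `u` and `v`, hence below `d`, and `d` is a common ancestor of `Y` strictly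
below `u`.
-/

open Relation SimpleGraph

namespace SimpleGraph.Walk

variable {V : Type*} {G : SimpleGraph V}

theorem IsPath.start_notMem_support_tail {u v : V} {p : G.Walk u v} (hp : p.IsPath) :
    u ∉ p.support.tail :=
  (List.nodup_cons.mp (p.cons_tail_support ▸ hp.support_nodup)).1

theorem one_lt_length_of_mem_support {u v w : V} {p : G.Walk u v} (hw : w ∈ p.support)
    (hwu : w ≠ u) (hwv : w ≠ v) : 1 < p.length := by
  match p with
  | nil => simp_all
  | cons _ nil => simp_all
  | cons _ (cons _ _) => simp

end SimpleGraph.Walk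

namespace PhyloNetwork

variable {V X : Type} [Fintype V] [Fintype X] (N : PhyloNetwork V X)

theorem below_trans {a b c : V} (hab : N.below a b) (hbc : N.below b c) : N.below a c :=
  hbc.trans hab

theorem below_antisymm_s1 {a b : V} (hab : N.below a b) (hba : N.below b a) : a = b := by
  rcases reflTransGen_iff_eq_or_transGen.mp hab with h | h
  · exact h
  · exact absurd (h.trans_left hba) (N.acyclic b)

theorem underlying_adj_of_adj {a b : V} (h : N.Adj a b) : N.underlying.Adj a b := by
  refine (fromRel_adj _ _ _).mpr ⟨?_, Or.inl h⟩
  rintro rfl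
  exact N.acyclic a (.single h)

theorem exists_below_minimal {S : Set V} (hS : S.Nonempty) :
    ∃ m ∈ S, ∀ w ∈ S, N.below w m → w = m := by
  have : Std.Irrefl (Function.swap (TransGen N.Adj)) := ⟨N.acyclic⟩
  obtain ⟨m, hm, hmin⟩ :=
    (Finite.wellFounded_of_trans_of_irrefl (Function.swap (TransGen N.Adj))).has_min S hS
  exact ⟨m, hm, fun w hw hwm =>
    (reflTransGen_iff_eq_or_transGen.mp hwm).resolve_right (hmin w hw)⟩

theorem exists_below_maximal {S : Set V} (hS : S.Nonempty) :
    ∃ m ∈ S, ∀ w ∈ S, N.below m w → w = m := by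
  have : Std.Irrefl (TransGen N.Adj) := ⟨N.acyclic⟩
  obtain ⟨m, hm, hmax⟩ := (Finite.wellFounded_of_trans_of_irrefl (TransGen N.Adj)).has_min S hS
  exact ⟨m, hm, fun w hw hmw =>
    ((reflTransGen_iff_eq_or_transGen.mp hmw).resolve_right (hmax w hw)).symm⟩

theorem exists_walk_of_below {a c : V} (h : N.below a c) :
    ∃ p : N.underlying.Walk c a, ∀ z ∈ p.support, N.below a z ∧ N.below z c := by
  induction h using ReflTransGen.head_induction_on with
  | refl => exact ⟨.nil, by simp [below, ReflTransGen.refl]⟩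
  | head hcb hba ih =>
    obtain ⟨p, hp⟩ := ih
    refine ⟨.cons (N.underlying_adj_of_adj hcb) p, ?_⟩
    simp only [Walk.support_cons, List.mem_cons, forall_eq_or_imp]
    exact ⟨⟨.head hcb hba, .refl⟩, fun z hz => ⟨(hp z hz).1, .head hcb (hp z hz).2⟩⟩

theorem exists_isPath_of_below {a c : V} (h : N.below a c) :
    ∃ p : N.underlying.Walk c a, p.IsPath ∧ ∀ z ∈ p.support, N.below a z ∧ N.below z c := by
  classical
  obtain ⟨p, hp⟩ := N.exists_walk_of_below h
  exact ⟨p.bypass, p.bypass_isPath, fun z hz => hp z (p.support_bypass_subset_support hz)⟩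

theorem exists_isPath_through {a b c : V} (hab : N.below a b) (hbc : N.below b c) :
    ∃ p : N.underlying.Walk c a, p.IsPath ∧ b ∈ p.support ∧ ∀ z ∈ p.support,
      (N.below b z ∧ N.below z c) ∨ (N.below a z ∧ N.below z b) := by
  obtain ⟨p, hp, hp_mem⟩ := N.exists_isPath_of_below hbc
  obtain ⟨q, hq, hq_mem⟩ := N.exists_isPath_of_below hab
  have hdisj : p.support.Disjoint q.support.tail := fun z hzp hzq => by
    have hzb : z = b := N.below_antisymm_s1 (hq_mem z (List.mem_of_mem_tail hzq)).2 (hp_mem z hzp).1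
    exact hq.start_notMem_support_tail (hzb ▸ hzq)
  refine ⟨p.append q, ?_, by simp, fun z hz => ?_⟩
  · rw [Walk.isPath_def, Walk.support_append, List.nodup_append']
    exact ⟨hp.support_nodup, hq.support_nodup.sublist (List.tail_sublist _), hdisj⟩
  · rcases (Walk.mem_support_append_iff p q).mp hz with hz | hz
    · exact .inl (hp_mem z hz)
    · exact .inr (hq_mem z hz)

def IsMinimalUpperBound (u v r : V) : Prop :=
  N.below u r ∧ N.below v r ∧ ∀ w, N.below u w → N.below v w → N.below w r → w = r

def IsMaximalLowerBound (u v d : V) : Prop :=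
  N.below d u ∧ N.below d v ∧ ∀ w, N.below w u → N.below w v → N.below d w → w = d

theorem exists_isMinimalUpperBound (u v : V) : ∃ r, N.IsMinimalUpperBound u v r := by
  obtain ⟨r, ⟨hur, hvr⟩, hr_min⟩ := N.exists_below_minimal (S := {w | N.below u w ∧ N.below v w})
    ⟨N.root, N.root_reaches u, N.root_reaches v⟩
  exact ⟨r, hur, hvr, fun w huw hvw hwr => hr_min w ⟨huw, hvw⟩ hwr⟩

theorem exists_isMaximalLowerBound_above {a u v : V} (hau : N.below a u) (hav : N.below a v) :
    ∃ d, N.IsMaximalLowerBound u v d ∧ N.below a d := by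
  obtain ⟨d, ⟨hdu, hdv, had⟩, hd_max⟩ :=
    N.exists_below_maximal (S := {w | N.below w u ∧ N.below w v ∧ N.below a w}) ⟨a, hau, hav, .refl⟩
  exact ⟨d, ⟨hdu, hdv, fun w hwu hwv hdw => hd_max w ⟨hwu, hwv, N.below_trans had hdw⟩ hdw⟩, had⟩

theorem exists_isCycle_of_incomparable {u v r d : V} (huv : ¬ N.below u v) (hvu : ¬ N.below v u)
    (hr : N.IsMinimalUpperBound u v r) (hd : N.IsMaximalLowerBound u v d) :
    ∃ C : N.underlying.Walk r r, C.IsCycle ∧ d ∈ C.support ∧ ∀ z ∈ C.support,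
      (N.below u z ∧ N.below z r) ∨ (N.below d z ∧ N.below z u) ∨
      (N.below v z ∧ N.below z r) ∨ (N.below d z ∧ N.below z v) := by
  obtain ⟨hur, hvr, hr_min⟩ := hr
  obtain ⟨hdu, hdv, hd_max⟩ := hd
  obtain ⟨p, hp, hup, hp_mem⟩ := N.exists_isPath_through hdu hur
  obtain ⟨q, hq, -, hq_mem⟩ := N.exists_isPath_through hdv hvr
  have hlen : 1 < p.length :=
    Walk.one_lt_length_of_mem_support hup (fun h => hvu (h ▸ hvr)) (fun h => huv (h ▸ hdv))
  have hdisj : p.support.tail.Disjoint q.reverse.support.tail := fun z hzp hzq => by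
    have hzr : z ≠ r := fun h => hp.start_notMem_support_tail (h ▸ hzp)
    have hzd : z ≠ d := fun h => hq.reverse.start_notMem_support_tail (h ▸ hzq)
    rw [Walk.support_reverse] at hzq
    rcases hp_mem z (List.mem_of_mem_tail hzp) with ⟨huz, hzr'⟩ | ⟨hdz, hzu⟩ <;>
      rcases hq_mem z (List.mem_reverse.mp (List.mem_of_mem_tail hzq)) with ⟨hvz, -⟩ | ⟨-, hzv⟩
    · exact hzr (hr_min z huz hvz hzr')
    · exact huv (N.below_trans huz hzv)
    · exact hvu (N.below_trans hvz hzu)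
    · exact hzd (hd_max z hzu hzv hdz)
  refine ⟨p.append q.reverse, hp.isCycle_append hq.reverse hdisj (.inl hlen),
    (Walk.mem_support_append_iff _ _).mpr (.inl p.end_mem_support), fun z hz => ?_⟩
  rw [Walk.mem_support_append_iff, Walk.support_reverse, List.mem_reverse] at hz
  rcases hz with hz | hz
  · rcases hp_mem z hz with h | h
    exacts [.inl h, .inr (.inl h)]
  · rcases hq_mem z hz with h | h
    exacts [.inr (.inr (.inl h)), .inr (.inr (.inr h))]

theorem isMaximalLowerBound_unique (hN : N.Level1) {u v d e : V} (huv : ¬ N.below u v)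
    (hvu : ¬ N.below v u) (hd : N.IsMaximalLowerBound u v d) (he : N.IsMaximalLowerBound u v e) :
    d = e := by
  obtain ⟨r, hr⟩ := N.exists_isMinimalUpperBound u v
  obtain ⟨C, hC, -, hC_mem⟩ := N.exists_isCycle_of_incomparable huv hvu hr hd
  obtain ⟨C', hC', heC', -⟩ := N.exists_isCycle_of_incomparable huv hvu hr he
  have heC : e ∈ C.support :=
    (hN.2 r r C C' hC hC' r C.start_mem_support C'.start_mem_support e).mpr heC'
  obtain ⟨heu, hev, -⟩ := he
  rcases hC_mem e heC with ⟨hue, -⟩ | ⟨hde, -⟩ | ⟨hve, -⟩ | ⟨hde, -⟩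
  · exact absurd (N.below_trans hue hev) huv
  · exact (hd.2.2 e heu hev hde).symm
  · exact absurd (N.below_trans hve heu) hvu
  · exact (hd.2.2 e heu hev hde).symm

theorem exists_isLCA (Y : Set X) : ∃ v, N.IsLCA Y v := by
  obtain ⟨m, hm, hm_min⟩ := N.exists_below_minimal (S := {w | N.CommonAncestor Y w})
    ⟨N.root, fun x _ => N.root_reaches (N.leaf x)⟩
  exact ⟨m, hm, fun w hw hwm => hwm.2 (hm_min w hw hwm.1)⟩

theorem eq_of_isLCA (hN : N.Level1) {Y : Set X} (hY : Y.Nonempty) {u v : V}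
    (hu : N.IsLCA Y u) (hv : N.IsLCA Y v) : u = v := by
  by_contra hne
  have huv : ¬ N.below u v := fun h => hv.2 u hu.1 ⟨h, hne⟩
  have hvu : ¬ N.below v u := fun h => hu.2 v hv.1 ⟨h, Ne.symm hne⟩
  obtain ⟨x, hx⟩ := hY
  obtain ⟨d, hd, -⟩ := N.exists_isMaximalLowerBound_above (hu.1 hx) (hv.1 hx)
  have hYd : N.CommonAncestor Y d := fun y hy => by
    obtain ⟨e, he, hye⟩ := N.exists_isMaximalLowerBound_above (hu.1 hy) (hv.1 hy)
    rwa [N.isMaximalLowerBound_unique hN huv hvu hd he]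
  exact hu.2 d hYd ⟨hd.1, fun hdu => huv (hdu ▸ hd.2.1)⟩

end PhyloNetwork

/-- In a level-1 phylogenetic network `N` on a finite set `X`,
every nonempty subset `Y` of `X` has exactly one lowest common ancestor. -/
theorem lca_unique {V X : Type} [Fintype V] [Fintype X]
    (N : PhyloNetwork V X) (hN : N.Level1) (Y : Set X) (hY : Y.Nonempty) :
    ∃! v, N.IsLCA Y v :=
  existsUnique_of_exists_of_unique (N.exists_isLCA Y) fun _ _ hu hv => N.eq_of_isLCA hN hY hu hv
end

section
/- In a level-1 phylogenetic network N on a finite set X, for every nonempty subset Y of X with unique lowest common ancestor lca(Y) and lowest stable ancestor lsa(Y): either lsa(Y) = lca(Y), or there exists a unique directed path from lsa(Y) to lca(Y), and this path contains no cut arc. -/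
open Relation

/-!
Let `w = lsa(Y) ≠ u = lca(Y)`. As `w` lies on every path from the root to `Y`, it lies above `u`.
If two directed paths from `w` to `u` differed, they would fork and meet again at a vertex `β`
with two in-neighbours below `w`, and the two routes into `β` close a cycle lying above `β`.
A path from the root to `Y` avoiding `β` would pass through `w` and close a second cycle through
`β` and a child of `β`; by level-1 the two cycles have the same vertices, which is absurd. So `β`
would be a stable ancestor strictly below `w`, contradicting minimality of the LSA.
Similarly, the head `b` of an arc of the path is strictly below `w`, so some path from the root
to `Y` avoids `b`; it keeps `b` connected to the root once the arc is deleted.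
-/

namespace Relation

variable {α : Type*} {r : α → α → Prop} {a b v : α}

theorem ReflTransGen.avoiding_of_not_between (h : ReflTransGen r a b)
    (hv : ¬ (ReflTransGen r a v ∧ ReflTransGen r v b)) :
    a ≠ v ∧ ReflTransGen (fun x y => r x y ∧ x ≠ v ∧ y ≠ v) a b := by
  induction h with
  | refl => exact ⟨fun hav => hv ⟨hav ▸ .refl, hav ▸ .refl⟩, .refl⟩
  | @tail c d hac hcd ih =>
    have hc : c ≠ v := fun hcv => hv ⟨hcv ▸ hac, hcv ▸ .single hcd⟩
    have hd : d ≠ v := fun hdv => hv ⟨hdv ▸ hac.tail hcd, hdv ▸ .refl⟩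
    obtain ⟨ha, hac'⟩ := ih fun ⟨hav, hvc⟩ => hv ⟨hav, hvc.tail hcd⟩
    exact ⟨ha, hac'.tail ⟨hcd, hc, hd⟩⟩

theorem ReflTransGen.restrict_ancestors (h : ReflTransGen r a b) :
    ReflTransGen (fun x y => r x y ∧ ReflTransGen r y b) a b := by
  induction h using ReflTransGen.head_induction_on with
  | refl => exact .refl
  | head hac hcb ih => exact .head ⟨hac, hcb⟩ ih

theorem ReflTransGen.exists_crossing {P : α → Prop} (h : ReflTransGen r a b) (ha : ¬ P a)
    (hb : P b) : ∃ x y, ReflTransGen r a x ∧ r x y ∧ ¬ P x ∧ P y ∧ ReflTransGen r y b := by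
  induction h using ReflTransGen.head_induction_on with
  | refl => exact absurd hb ha
  | @head a c hac hcb ih =>
    by_cases hc : P c
    · exact ⟨a, c, .refl, hac, ha, hc, hcb⟩
    · obtain ⟨x, y, hcx, hxy, hx, hy, hyb⟩ := ih hc
      exact ⟨x, y, hcx.head hac, hxy, hx, hy, hyb⟩

theorem exists_two_parents_of_fork (hr : ∀ v, ¬ TransGen r v v) {x c₁ c₂ t : α}
    (h₁ : r x c₁) (h₂ : r x c₂) (hne : c₁ ≠ c₂) (ht₁ : ReflTransGen r c₁ t)
    (ht₂ : ReflTransGen r c₂ t) :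
    ∃ β a₁ a₂, a₁ ≠ a₂ ∧ ReflTransGen r x a₁ ∧ r a₁ β ∧ ReflTransGen r x a₂ ∧ r a₂ β ∧
      ReflTransGen r β t := by
  have hx : ¬ ReflTransGen r c₁ x := fun h => hr x (.head' h₁ h)
  by_cases hc₂ : ReflTransGen r c₁ c₂
  · obtain ⟨a₁, hc₁a₁, ha₁⟩ :=
      TransGen.tail'_iff.mp ((reflTransGen_iff_eq_or_transGen.mp hc₂).resolve_left hne.symm)
    refine ⟨c₂, a₁, x, ?_, .head h₁ hc₁a₁, ha₁, .refl, h₂, ht₂⟩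
    rintro rfl
    exact hx hc₁a₁
  · -- `β` is the first vertex on the way from `c₂` to `t` that lies below `c₁`
    obtain ⟨a₂, β, hc₂a₂, ha₂β, ha₂, hβ, hβt⟩ := ht₂.exists_crossing hc₂ ht₁
    have hxa₂ : ReflTransGen r x a₂ := .head h₂ hc₂a₂
    rcases hβ.cases_tail with rfl | ⟨a₁, hc₁a₁, ha₁β⟩
    · refine ⟨_, x, a₂, ?_, .refl, h₁, hxa₂, ha₂β, hβt⟩
      rintro rfl
      exact hr x (.head' h₂ hc₂a₂)
    · exact ⟨β, a₁, a₂, fun h => ha₂ (h ▸ hc₁a₁), .head h₁ hc₁a₁, ha₁β, hxa₂, ha₂β, hβt⟩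

end Relation

theorem List.IsChain.rel_of_mem_zip_tail {α : Type*} {r : α → α → Prop} {a b : α} :
    ∀ {l : List α}, l.IsChain r → (a, b) ∈ l.zip l.tail → r a b
  | [], _, h => by simp at h
  | [_], _, h => by simp at h
  | x :: y :: l, hc, h => by
    rw [List.isChain_cons_cons] at hc
    rcases List.mem_cons.mp h with h | h
    · obtain ⟨rfl, rfl⟩ := Prod.mk.inj h
      exact hc.1
    · exact hc.2.rel_of_mem_zip_tail h

theorem SimpleGraph.exists_isCycle_of_reachable_deleteEdges {V : Type*} {G : SimpleGraph V}
    {a b : V} (hab : G.Adj a b) (h : (G.deleteEdges {s(a, b)}).Reachable a b) :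
    ∃ z, ∃ c : G.Walk z z, c.IsCycle ∧ a ∈ c.support ∧ b ∈ c.support := by
  obtain ⟨z, c, hc, he⟩ := adj_and_reachable_delete_edges_iff_exists_cycle.mp ⟨hab, h⟩
  exact ⟨z, c, hc, c.fst_mem_support_of_mem_edges he, c.snd_mem_support_of_mem_edges he⟩

namespace PhyloNetwork

variable {V X : Type} [Fintype V] [Fintype X] (N : PhyloNetwork V X)

def ReachableAvoiding (v a b : V) : Prop :=
  a ≠ v ∧ ReflTransGen (fun x y => N.Adj x y ∧ x ≠ v ∧ y ≠ v) a b

variable {N} {Y : Set X} {p q : List V} {a b c u v w : V}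

theorem ne_of_adj (h : N.Adj a b) : a ≠ b := by
  rintro rfl
  exact N.acyclic a (.single h)

theorem not_reflTransGen_of_transGen (h : TransGen N.Adj a b) : ¬ ReflTransGen N.Adj b a :=
  fun h' => N.acyclic a (h.trans_left h')

theorem isDipath_iff : N.IsDipath p a b ↔
    ∃ l, p = a :: l ∧ (a :: l).IsChain N.Adj ∧ (a :: l).getLast (List.cons_ne_nil _ _) = b := by
  constructor
  · rintro ⟨hne, hhead, hlast, hchain, -⟩
    obtain ⟨l, rfl⟩ : ∃ l, p = a :: l := by
      cases p with
      | nil => exact absurd rfl hne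
      | cons x l => exact ⟨l, by simp_all⟩
    refine ⟨l, rfl, hchain, ?_⟩
    rw [List.getLast?_eq_some_getLast (List.cons_ne_nil _ _)] at hlast
    exact Option.some_injective _ hlast
  · rintro ⟨l, rfl, hchain, hlast⟩
    refine ⟨List.cons_ne_nil _ _, rfl,
      by rw [List.getLast?_eq_some_getLast (List.cons_ne_nil _ _), hlast], hchain, ?_⟩
    -- a directed path is ordered by the strict partial order `TransGen N.Adj`
    have hsorted : (a :: l).Pairwise (TransGen N.Adj) :=
      List.isChain_iff_pairwise.mp (hchain.imp fun _ _ => .single)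
    exact hsorted.imp fun h => by rintro rfl; exact N.acyclic _ h

theorem exists_isDipath (h : ReflTransGen N.Adj a b) : ∃ p, N.IsDipath p a b := by
  obtain ⟨l, hl, hlb⟩ := List.exists_isChain_cons_of_relationReflTransGen h
  exact ⟨a :: l, isDipath_iff.mpr ⟨l, rfl, hl, hlb⟩⟩

theorem IsDipath.reflTransGen_of_mem (hp : N.IsDipath p a b) (hc : c ∈ p) :
    ReflTransGen N.Adj a c ∧ ReflTransGen N.Adj c b := by
  obtain ⟨l, rfl, hl, hlb⟩ := isDipath_iff.mp hp
  exact ⟨hl.induction (ReflTransGen N.Adj a ·) _ (fun _ _ h hx => hx.tail h) (fun _ => .refl) c hc,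
    hl.backwards_cons_induction (ReflTransGen N.Adj · b) _ hlb (fun _ _ h hy => hy.head h) .refl
      c hc⟩

theorem IsDipath.transGen_of_arcIn (hp : N.IsDipath p a b) (h : ArcIn p u v) :
    TransGen N.Adj a v ∧ ReflTransGen N.Adj v b :=
  ⟨.tail' (hp.reflTransGen_of_mem (List.of_mem_zip h).1).1
      (List.IsChain.rel_of_mem_zip_tail hp.2.2.2.1 h),
    (hp.reflTransGen_of_mem (List.mem_of_mem_tail (List.of_mem_zip h).2)).2⟩

theorem exists_isDipath_not_mem_iff :
    (∃ p, N.IsDipath p a b ∧ v ∉ p) ↔ N.ReachableAvoiding v a b := by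
  constructor
  · rintro ⟨p, hp, hv⟩
    obtain ⟨l, rfl, hl, hlb⟩ := isDipath_iff.mp hp
    refine ⟨fun h => hv (h ▸ List.mem_cons_self), List.relationReflTransGen_of_exists_isChain_cons l
      (hl.imp_of_mem_imp fun x y hx hy hxy => ⟨hxy, ne_of_mem_of_not_mem hx hv,
        ne_of_mem_of_not_mem hy hv⟩) hlb⟩
  · rintro ⟨ha, h⟩
    obtain ⟨l, hl, hlb⟩ := List.exists_isChain_cons_of_relationReflTransGen h
    refine ⟨a :: l, isDipath_iff.mpr ⟨l, rfl, hl.imp fun _ _ h => h.1, hlb⟩, fun hv => ?_⟩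
    rcases List.mem_cons.mp hv with h | h
    · exact ha h.symm
    · exact hl.cons_induction (· ≠ v) l (fun _ _ h _ => h.2.2) ha v h rfl

theorem stableAncestor_iff :
    N.StableAncestor Y v ↔ ∀ y ∈ Y, ¬ N.ReachableAvoiding v N.root (N.leaf y) := by
  simp only [StableAncestor, ← exists_isDipath_not_mem_iff, not_exists, not_and, not_not]

theorem ReachableAvoiding.ne (h : N.ReachableAvoiding v a b) : b ≠ v := by
  rcases h.2.cases_tail with rfl | ⟨c, -, hcb⟩
  exacts [h.1, hcb.2.2]

theorem ReachableAvoiding.trans (hab : N.ReachableAvoiding v a b)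
    (hbc : N.ReachableAvoiding v b c) : N.ReachableAvoiding v a c :=
  ⟨hab.1, hab.2.trans hbc.2⟩

theorem ReachableAvoiding.reachable {G : SimpleGraph V}
    (hG : ∀ x y, N.Adj x y → x ≠ v → y ≠ v → G.Adj x y) (h : N.ReachableAvoiding v a b) :
    G.Reachable a b :=
  (SimpleGraph.reachable_iff_reflTransGen a b).mpr
    (ReflTransGen.mono (fun x y hxy => hG x y hxy.1 hxy.2.1 hxy.2.2) _ _ h.2)

theorem StableAncestor.below_or_between {y : X} (hv : N.StableAncestor Y v) (hy : y ∈ Y)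
    (ha : N.below (N.leaf y) a) : N.below a v ∨ (N.below v a ∧ N.below (N.leaf y) v) := by
  by_contra! h
  exact stableAncestor_iff.mp hv y hy
    (ReachableAvoiding.trans ((N.root_reaches a).avoiding_of_not_between fun h' => h.1 h'.2)
      (ha.avoiding_of_not_between fun h' => h.2 h'.1 h'.2))

theorem StableAncestor.commonAncestor (hv : N.StableAncestor Y v) : N.CommonAncestor Y v :=
  fun _ hy => (hv.below_or_between hy .refl).elim id And.right

theorem StableAncestor.below_of_isLCA (hv : N.StableAncestor Y v) (hu : N.IsLCA Y u)
    (hY : Y.Nonempty) (hvu : v ≠ u) : N.below u v := by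
  obtain ⟨y, hy⟩ := hY
  exact (hv.below_or_between hy (hu.1 hy)).resolve_right
    fun h => hu.2 v hv.commonAncestor ⟨h.1, hvu⟩

theorem StableAncestor.reachableAvoiding_of_root {y : X} (hw : N.StableAncestor Y w) (hy : y ∈ Y)
    (h : N.ReachableAvoiding v N.root (N.leaf y)) : N.ReachableAvoiding v w (N.leaf y) := by
  by_cases hvia : ReflTransGen (fun x y => N.Adj x y ∧ x ≠ v ∧ y ≠ v) N.root w ∧
      ReflTransGen (fun x y => N.Adj x y ∧ x ≠ v ∧ y ≠ v) w (N.leaf y)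
  · exact ⟨ReachableAvoiding.ne ⟨h.1, hvia.1⟩, hvia.2⟩
  · obtain ⟨hroot, hpath⟩ := h.2.avoiding_of_not_between hvia
    exact absurd ⟨hroot, ReflTransGen.mono (fun _ _ hxy => ⟨hxy.1.1, hxy.2⟩) _ _ hpath⟩
      (stableAncestor_iff.mp hw y hy)

theorem IsLSA.not_stableAncestor (hw : N.IsLSA Y w) (h : TransGen N.Adj w v) :
    ¬ N.StableAncestor Y v :=
  fun hv => not_reflTransGen_of_transGen h (hw.2 v hv)

theorem not_cutArc_of_reachableAvoiding {z : V} (h : N.ReachableAvoiding b N.root z)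
    (hz : N.below z b) : ¬ N.CutArc a b := by
  rintro ⟨-, hcut⟩
  set G := SimpleGraph.fromRel fun x y => N.Adj x y ∧ ¬ (x = a ∧ y = b)
  have hG : ∀ x y, N.Adj x y → y ≠ b → G.Adj x y := fun x y hxy hy =>
    (SimpleGraph.fromRel_adj _ x y).mpr ⟨ne_of_adj hxy, .inl ⟨hxy, fun h => hy h.2⟩⟩
  have hGb : ∀ x y, N.Adj x y → x ≠ b → y ≠ b → G.Adj x y := fun x y hxy _ hy => hG x y hxy hy
  -- `b` stays connected to the root through one of its children, which lies above `z`
  have hb : G.Reachable N.root b := by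
    obtain ⟨c, hbc, hcz⟩ :=
      TransGen.head'_iff.mp ((reflTransGen_iff_eq_or_transGen.mp hz).resolve_left h.ne)
    have hcz' : N.ReachableAvoiding b c z :=
      hcz.avoiding_of_not_between fun h' => not_reflTransGen_of_transGen (.single hbc) h'.1
    exact (h.reachable hGb).trans
      ((hcz'.reachable hGb).symm.trans (hG b c hbc (ne_of_adj hbc).symm).reachable.symm)
  refine hcut ((SimpleGraph.connected_iff_exists_forall_reachable G).mpr ⟨N.root, fun v => ?_⟩)
  induction N.root_reaches v with
  | refl => rfl
  | @tail x y _ hxy ih =>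
    by_cases hy : y = b
    · exact hy ▸ hb
    · exact ih.trans (hG x y hxy hy).reachable

theorem IsLSA.not_cutArc (hw : N.IsLSA Y w) (hu : N.CommonAncestor Y u) (hp : N.IsDipath p w u)
    (hab : ArcIn p a b) : ¬ N.CutArc a b := by
  obtain ⟨hwb, hbu⟩ := hp.transGen_of_arcIn hab
  obtain ⟨y, hy, hy'⟩ : ∃ y ∈ Y, N.ReachableAvoiding b N.root (N.leaf y) := by
    simpa [stableAncestor_iff] using hw.not_stableAncestor hwb
  exact not_cutArc_of_reachableAvoiding hy' (hbu.trans (hu hy))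

theorem exists_isCycle_above {a₁ a₂ β x : V} (h₁ : N.Adj a₁ β) (h₂ : N.Adj a₂ β)
    (hne : a₁ ≠ a₂) (hx₁ : ReflTransGen N.Adj x a₁) (hx₂ : ReflTransGen N.Adj x a₂) :
    ∃ z, ∃ C : N.underlying.Walk z z,
      C.IsCycle ∧ β ∈ C.support ∧ ∀ v ∈ C.support, ReflTransGen N.Adj v β := by
  -- the cycle is first found in the graph `H` of the arcs above `β`
  set H := SimpleGraph.fromRel fun u v => N.Adj u v ∧ ReflTransGen N.Adj v β
  have hH : ∀ {u v}, H.Adj u v → ReflTransGen N.Adj u β := by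
    intro u v huv
    rcases ((SimpleGraph.fromRel_adj _ u v).mp huv).2 with ⟨h, hv⟩ | ⟨-, hu⟩
    exacts [hv.head h, hu]
  have hHle : H ≤ N.underlying := fun u v huv =>
    (SimpleGraph.fromRel_adj _ u v).mpr ⟨huv.ne, huv.2.imp And.left And.left⟩
  have hHβ : ∀ {u}, N.Adj u β → H.Adj u β := fun h =>
    (SimpleGraph.fromRel_adj _ _ _).mpr ⟨ne_of_adj h, .inl ⟨h, .refl⟩⟩
  set H' := H.deleteEdges {s(a₁, β)}
  have hH' : ∀ u v, N.Adj u v → TransGen N.Adj v β → H'.Adj u v := by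
    intro u v huv hvβ
    refine (SimpleGraph.deleteEdges_adj ..).mpr ⟨(SimpleGraph.fromRel_adj _ u v).mpr
      ⟨ne_of_adj huv, .inl ⟨huv, hvβ.to_reflTransGen⟩⟩, ?_⟩
    rw [Set.mem_singleton_iff, Sym2.eq_iff]
    rintro (⟨-, rfl⟩ | ⟨rfl, -⟩)
    exacts [N.acyclic _ hvβ, N.acyclic _ (.head huv hvβ)]
  have hreach : ∀ {a}, ReflTransGen N.Adj x a → N.Adj a β → H'.Reachable x a := fun hxa haβ =>
    (SimpleGraph.reachable_iff_reflTransGen _ _).mpr (ReflTransGen.mono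
      (fun u v huv => hH' u v huv.1 (.tail' huv.2 haβ)) _ _ hxa.restrict_ancestors)
  have ha₂β : H'.Adj a₂ β := (SimpleGraph.deleteEdges_adj ..).mpr
    ⟨hHβ h₂, by
      rw [Set.mem_singleton_iff, Sym2.eq_iff]
      rintro (⟨h, -⟩ | ⟨-, h⟩)
      exacts [hne h.symm, ne_of_adj h₁ h.symm]⟩
  obtain ⟨z, C, hC, -, hβC⟩ := SimpleGraph.exists_isCycle_of_reachable_deleteEdges (hHβ h₁)
    ((hreach hx₁ h₁).symm.trans ((hreach hx₂ h₂).trans ha₂β.reachable))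
  refine ⟨z, C.mapLe hHle, hC.mapLe hHle, by rwa [SimpleGraph.Walk.support_mapLe_eq_support],
    fun v hv => ?_⟩
  rw [SimpleGraph.Walk.support_mapLe_eq_support,
    SimpleGraph.Walk.mem_support_iff_exists_mem_edges_of_not_nil hC.not_nil] at hv
  obtain ⟨e, he, hve⟩ := hv
  obtain ⟨v', rfl⟩ := Sym2.mem_iff_exists.mp hve
  exact hH (C.adj_of_mem_edges he)

theorem stableAncestor_of_two_parents (hN : N.Level1) {a₁ a₂ β : V}
    (hw : N.StableAncestor Y w) (hβ : N.CommonAncestor Y β) (h₁ : N.Adj a₁ β)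
    (h₂ : N.Adj a₂ β) (hne : a₁ ≠ a₂) (hw₁ : ReflTransGen N.Adj w a₁)
    (hw₂ : ReflTransGen N.Adj w a₂) : N.StableAncestor Y β := by
  obtain ⟨z, C, hC, hβC, hCβ⟩ := exists_isCycle_above h₁ h₂ hne hw₁ hw₂
  refine stableAncestor_iff.mpr fun y hy hroot => ?_
  obtain ⟨γ, hβγ, hγy⟩ :=
    TransGen.head'_iff.mp ((reflTransGen_iff_eq_or_transGen.mp (hβ hy)).resolve_left hroot.ne)
  set G := N.underlying.deleteEdges {s(β, γ)}
  have hG : ∀ u v, N.Adj u v → s(u, v) ≠ s(β, γ) → G.Adj u v := fun u v huv he =>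
    (SimpleGraph.deleteEdges_adj ..).mpr
      ⟨(SimpleGraph.fromRel_adj _ u v).mpr ⟨ne_of_adj huv, .inl huv⟩, he⟩
  have hGβ : ∀ u v, N.Adj u v → u ≠ β → v ≠ β → G.Adj u v := fun u v huv hu hv =>
    hG u v huv fun he => hv ((Sym2.eq_iff.mp he).resolve_left fun h => hu h.1).2
  have hwa₁ : N.ReachableAvoiding β w a₁ :=
    hw₁.avoiding_of_not_between fun h => not_reflTransGen_of_transGen (.single h₁) h.2
  have hγy' : N.ReachableAvoiding β γ (N.leaf y) :=
    hγy.avoiding_of_not_between fun h => not_reflTransGen_of_transGen (.single hβγ) h.1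
  have ha₁β : G.Adj a₁ β := hG a₁ β h₁ fun he => by
    obtain rfl : a₁ = γ := ((Sym2.eq_iff.mp he).resolve_left fun h => ne_of_adj h₁ h.1).1
    exact N.acyclic _ (.head h₁ (.single hβγ))
  have hreach : G.Reachable β γ :=
    ha₁β.symm.reachable.trans ((hwa₁.reachable hGβ).symm.trans
      (((hw.reachableAvoiding_of_root hy hroot).reachable hGβ).trans (hγy'.reachable hGβ).symm))
  obtain ⟨z', C', hC', hβC', hγC'⟩ := SimpleGraph.exists_isCycle_of_reachable_deleteEdges
    ((SimpleGraph.fromRel_adj _ β γ).mpr ⟨ne_of_adj hβγ, .inl hβγ⟩) hreach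
  have hγC : γ ∈ C.support := (hN.2 z' z C' C hC' hC β hβC' hβC γ).mp hγC'
  exact not_reflTransGen_of_transGen (.single hβγ) (hCβ γ hγC)

theorem exists_fork_of_isDipath_ne {s t : V} (hp : N.IsDipath p s t) (hq : N.IsDipath q s t)
    (hne : p ≠ q) : ∃ x c₁ c₂, ReflTransGen N.Adj s x ∧ N.Adj x c₁ ∧ N.Adj x c₂ ∧ c₁ ≠ c₂ ∧
      ReflTransGen N.Adj c₁ t ∧ ReflTransGen N.Adj c₂ t := by
  obtain ⟨l, rfl, hl, hlt⟩ := isDipath_iff.mp hp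
  obtain ⟨m, rfl, hm, hmt⟩ := isDipath_iff.mp hq
  clear hp hq
  have step : ∀ {s c k}, (s :: c :: k).IsChain N.Adj →
      (s :: c :: k).getLast (List.cons_ne_nil _ _) = t → N.Adj s c ∧ ReflTransGen N.Adj c t :=
    fun h ht => ⟨(List.isChain_cons_cons.mp h).1,
      List.relationReflTransGen_of_exists_isChain_cons _ h.tail
        (by rwa [List.getLast_cons_cons] at ht)⟩
  induction l generalizing s m with
  | nil =>
    cases m with
    | nil => exact absurd rfl hne
    | cons c k =>
      rw [List.getLast_singleton] at hlt
      subst hlt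
      exact (N.acyclic s (.head' (step hm hmt).1 (step hm hmt).2)).elim
  | cons c₁ l ih =>
    cases m with
    | nil =>
      rw [List.getLast_singleton] at hmt
      subst hmt
      exact (N.acyclic s (.head' (step hl hlt).1 (step hl hlt).2)).elim
    | cons c₂ k =>
      obtain ⟨hsc₁, hc₁t⟩ := step hl hlt
      obtain ⟨hsc₂, hc₂t⟩ := step hm hmt
      by_cases hc : c₁ = c₂
      · subst hc
        rw [List.getLast_cons_cons] at hlt hmt
        obtain ⟨x, d₁, d₂, hx, hxd₁, hxd₂, hd, hd₁, hd₂⟩ :=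
          ih hl.tail hlt k (fun h => hne (by rw [h])) hm.tail hmt
        exact ⟨x, d₁, d₂, hx.head hsc₁, hxd₁, hxd₂, hd, hd₁, hd₂⟩
      · exact ⟨s, c₁, c₂, .refl, hsc₁, hsc₂, hc, hc₁t, hc₂t⟩

theorem IsLSA.isDipath_unique (hN : N.Level1) (hw : N.IsLSA Y w) (hu : N.CommonAncestor Y u)
    (hp : N.IsDipath p w u) (hq : N.IsDipath q w u) : p = q := by
  by_contra hne
  obtain ⟨x, c₁, c₂, hwx, hxc₁, hxc₂, hc, hc₁u, hc₂u⟩ := exists_fork_of_isDipath_ne hp hq hne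
  obtain ⟨β, a₁, a₂, ha, hxa₁, ha₁β, hxa₂, ha₂β, hβu⟩ :=
    exists_two_parents_of_fork N.acyclic hxc₁ hxc₂ hc hc₁u hc₂u
  have hβ : N.StableAncestor Y β := stableAncestor_of_two_parents hN hw.1
    (fun _ hy => hβu.trans (hu hy)) ha₁β ha₂β ha (hwx.trans hxa₁) (hwx.trans hxa₂)
  exact hw.not_stableAncestor (.tail' (hwx.trans hxa₁) ha₁β) hβ

end PhyloNetwork

theorem lsa_eq_lca_or_unique_dipath_general {V X : Type} [Fintype V] [Fintype X]
    (N : PhyloNetwork V X) (hN : N.Level1) (Y : Set X) (hY : Y.Nonempty)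
    (u w : V) (hu : N.IsLCA Y u) (hw : N.IsLSA Y w) :
    w = u ∨ ((∃! p : List V, N.IsDipath p w u) ∧
      ∀ p : List V, N.IsDipath p w u → ∀ a b, PhyloNetwork.ArcIn p a b → ¬ N.CutArc a b) := by
  by_cases hwu : w = u
  · exact Or.inl hwu
  obtain ⟨p, hp⟩ := PhyloNetwork.exists_isDipath (hw.1.below_of_isLCA hu hY hwu)
  exact Or.inr ⟨⟨p, hp, fun q hq => hw.isDipath_unique hN hu.1 hq hp⟩,
    fun q hq a b hab => hw.not_cutArc hu.1 hq hab⟩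

/-- In a level-1 phylogenetic network `N` on a finite set `X`, for
every nonempty subset `Y` of `X` with unique lowest common ancestor `lca(Y)`
and lowest stable ancestor `lsa(Y)`: either `lsa(Y) = lca(Y)`, or there exists
a unique directed path from `lsa(Y)` to `lca(Y)`, and this path contains no
cut arc. -/
theorem lsa_eq_lca_or_unique_dipath {V X : Type} [Fintype V] [Fintype X]
    (N : PhyloNetwork V X) (hN : N.Level1) (Y : Set X) (hY : Y.Nonempty)
    (u w : V) (hu : N.IsLCA Y u) (hu' : ∀ v, N.IsLCA Y v → v = u)
    (hw : N.IsLSA Y w) :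
    w = u ∨ ((∃! p : List V, N.IsDipath p w u) ∧
      ∀ p : List V, N.IsDipath p w u → ∀ a b, PhyloNetwork.ArcIn p a b → ¬ N.CutArc a b) :=
  lsa_eq_lca_or_unique_dipath_general N hN Y hY u w hu hw
end

section
/- In a level-1 phylogenetic network N on a finite set X, for distinct taxa x, y ∈ X, a vertex v equals the unique lowest common ancestor lca(x,y) of {x,y} if and only if v is a non-leaf vertex such that one child of v is above x but not above y while the other child of v is above y but not above x. -/
open Relation

namespace PhyloNetwork

variable {V X : Type} [Fintype V] [Fintype X] (N : PhyloNetwork V X)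

lemma below_step {u v : V} (h : N.below u v) (hne : u ≠ v) :
    ∃ c, N.Adj v c ∧ N.below u c := by
  rcases Relation.ReflTransGen.cases_head h with h | ⟨c, hc, hrest⟩
  · exact absurd h.symm hne
  · exact ⟨c, hc, hrest⟩

lemma child_strictlyBelow {c v : V} (h : N.Adj v c) : N.strictlyBelow c v := by
  refine ⟨Relation.ReflTransGen.single h, fun hcv => ?_⟩
  exact N.acyclic v (Relation.TransGen.single (hcv ▸ h))

lemma child_eq_of_two {v c₁ c₂ c : V} (hout : N.outDeg v ≤ 2) (hne : c₁ ≠ c₂)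
    (h1 : N.Adj v c₁) (h2 : N.Adj v c₂) (hc : N.Adj v c) : c = c₁ ∨ c = c₂ := by
  by_contra hcon
  push_neg at hcon
  obtain ⟨hc1, hc2⟩ := hcon
  have hsub : ({c₁, c₂, c} : Set V) ⊆ {u | N.Adj v u} := by
    intro z hz
    rcases hz with rfl | rfl | rfl <;> assumption
  have h3 : ({c₁, c₂, c} : Set V).ncard = 3 := by
    rw [Set.ncard_insert_of_notMem (by simp [hne, Ne.symm hc1]),
      Set.ncard_insert_of_notMem (by simp [Ne.symm hc2]), Set.ncard_singleton]
  have := Set.ncard_le_ncard hsub (Set.toFinite _)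
  rw [h3] at this
  exact absurd (this.trans hout) (by norm_num)

end PhyloNetwork

/-- In a level-1 phylogenetic network `N` on a finite set `X`, for
distinct taxa `x, y ∈ X`, a vertex `v` equals the unique lowest common
ancestor `lca(x,y)` of `{x,y}` if and only if `v` is a non-leaf vertex such
that one child of `v` is above `x` but not above `y` while the other child of
`v` is above `y` but not above `x`. -/
theorem lca_iff_children_split {V X : Type} [Fintype V] [Fintype X]
    (N : PhyloNetwork V X) (hN : N.Level1) (x y : X) (hxy : x ≠ y) (v : V) :
    N.IsLCA {x, y} v ↔
      (¬ N.IsLeaf v ∧ ∃ c₁ c₂, c₁ ≠ c₂ ∧ N.Adj v c₁ ∧ N.Adj v c₂ ∧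
        N.below (N.leaf x) c₁ ∧ ¬ N.below (N.leaf y) c₁ ∧
        N.below (N.leaf y) c₂ ∧ ¬ N.below (N.leaf x) c₂) := by
  obtain ⟨⟨hdeg, _⟩, _⟩ := hN
  constructor
  · rintro ⟨hca, hmin⟩
    have hx : N.below (N.leaf x) v := hca (Set.mem_insert _ _)
    have hy : N.below (N.leaf y) v := hca (Set.mem_insert_of_mem _ rfl)
    have hleaf : ∀ z : X, N.IsLeaf (N.leaf z) := fun z => (N.label z).prop
    have hvnl : ¬ N.IsLeaf v := by
      intro hl
      have hax : N.leaf x = v := by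
        rcases Relation.ReflTransGen.cases_head hx with h | ⟨c, hc, _⟩
        · exact h.symm
        · exact absurd hc (hl c)
      have hay : N.leaf y = v := by
        rcases Relation.ReflTransGen.cases_head hy with h | ⟨c, hc, _⟩
        · exact h.symm
        · exact absurd hc (hl c)
      have : N.label x = N.label y := Subtype.ext (hax.trans hay.symm)
      exact hxy (N.label.injective this)
    have hxv : N.leaf x ≠ v := fun h => hvnl (h ▸ hleaf x)
    have hyv : N.leaf y ≠ v := fun h => hvnl (h ▸ hleaf y)
    obtain ⟨a, hva, hxa⟩ := N.below_step hx hxv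
    obtain ⟨b, hvb, hyb⟩ := N.below_step hy hyv
    have hCA : ∀ w, N.below (N.leaf x) w → N.below (N.leaf y) w →
        N.CommonAncestor {x, y} w := by
      intro w h1 h2 z hz
      rcases hz with rfl | rfl
      · exact h1
      · exact h2
    have hab : a ≠ b := by
      rintro rfl
      exact hmin a (hCA a hxa hyb) (N.child_strictlyBelow hva)
    have hnya : ¬ N.below (N.leaf y) a := fun h =>
      hmin a (hCA a hxa h) (N.child_strictlyBelow hva)
    have hnxb : ¬ N.below (N.leaf x) b := fun h =>
      hmin b (hCA b h hyb) (N.child_strictlyBelow hvb)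
    exact ⟨hvnl, a, b, hab, hva, hvb, hxa, hnya, hyb, hnxb⟩
  · rintro ⟨hvnl, c₁, c₂, hne, h1, h2, hx1, hny1, hy2, hnx2⟩
    have hout : N.outDeg v ≤ 2 := (hdeg v hvnl).2
    refine ⟨?_, ?_⟩
    · intro z hz
      rcases hz with rfl | rfl
      · exact Relation.ReflTransGen.head h1 hx1
      · exact Relation.ReflTransGen.head h2 hy2
    · rintro u hu ⟨hbel, hneq⟩
      obtain ⟨c, hvc, huc⟩ := N.below_step hbel hneq
      have hxu : N.below (N.leaf x) u := hu (Set.mem_insert _ _)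
      have hyu : N.below (N.leaf y) u := hu (Set.mem_insert_of_mem _ rfl)
      rcases N.child_eq_of_two hout hne h1 h2 hvc with rfl | rfl
      · exact hny1 (huc.trans hyu)
      · exact hnx2 (huc.trans hxu)
end

section
/- In a rooted phylogenetic network N on a finite set X, for every nonempty subset Y of X, every lowest common ancestor of Y is below the lowest stable ancestor lsa(Y) of Y. -/
open Relation

theorem List.IsChain.nodup_of_acyclic {α : Type*} {r : α → α → Prop} {l : List α}
    (hr : ∀ a, ¬ TransGen r a a) (hl : l.IsChain r) : l.Nodup :=
  (List.isChain_iff_pairwise.1 (hl.imp fun _ _ => TransGen.single)).imp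
    fun {a b} (hab : TransGen r a b) (hEq : a = b) => hr b (hEq ▸ hab)

theorem List.exists_isChain_cons_through {α : Type*} {r : α → α → Prop} {a v b : α}
    (hav : ReflTransGen r a v) (hvb : ReflTransGen r v b) :
    ∃ l, IsChain r (a :: l) ∧ getLast (a :: l) (cons_ne_nil _ _) = b ∧
      ∀ z ∈ a :: l, ReflTransGen r z v ∨ ReflTransGen r v z := by
  induction hav using ReflTransGen.head_induction_on with
  | refl =>
    obtain ⟨l, hl, hlast⟩ := exists_isChain_cons_of_relationReflTransGen hvb
    refine ⟨l, hl, hlast, fun z hz => .inr ?_⟩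
    exact hl.induction (ReflTransGen r v) _ (fun _ _ h₁ h₂ => h₂.tail h₁) (fun _ => .refl) z hz
  | head haa' ha'v ih =>
    obtain ⟨l, hl, hlast, hcomp⟩ := ih
    refine ⟨_ :: l, hl.cons_cons haa', by rwa [getLast_cons_cons], ?_⟩
    rintro z (_ | ⟨_, hz⟩)
    · exact .inl (ha'v.head haa')
    · exact hcomp z hz

namespace PhyloNetwork

variable {V X : Type} [Fintype V] [Fintype X] (N : PhyloNetwork V X)

theorem exists_isDipath_through {a v b : V} (hva : N.below v a) (hbv : N.below b v) :
    ∃ p, N.IsDipath p a b ∧ ∀ z ∈ p, N.below v z ∨ N.below z v := by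
  obtain ⟨l, hl, hlast, hcomp⟩ := List.exists_isChain_cons_through hva hbv
  refine ⟨a :: l, ⟨List.cons_ne_nil _ _, rfl, ?_, hl, hl.nodup_of_acyclic N.acyclic⟩, hcomp⟩
  rw [List.getLast?_eq_some_getLast (List.cons_ne_nil _ _), hlast]

theorem exists_isDipath_s13 {a b : V} (hba : N.below b a) : ∃ p, N.IsDipath p a b :=
  (N.exists_isDipath_through .refl hba).imp fun _ => And.left

variable {N}

theorem below_of_mem_isDipath {p : List V} {a b z : V} (hp : N.IsDipath p a b) (hz : z ∈ p) :
    N.below b z := by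
  obtain ⟨-, -, hlast, hchain, -⟩ := hp
  refine List.IsChain.backwards_induction (fun z => N.below b z) p hchain
    (fun _ _ h₁ h₂ => h₂.head h₁) (fun hne' => ?_) z hz
  rw [List.getLast?_eq_some_getLast hne', Option.some_inj] at hlast
  rw [hlast]
  exact .refl

theorem StableAncestor.commonAncestor_s13 {Y : Set X} {w : V} (hw : N.StableAncestor Y w) :
    N.CommonAncestor Y w := fun y hy =>
  have ⟨p, hp⟩ := N.exists_isDipath_s13 (N.root_reaches (N.leaf y))
  below_of_mem_isDipath hp (hw y hy p hp)

theorem IsLCA.eq_of_below {Y : Set X} {u v : V} (hu : N.IsLCA Y u)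
    (hv : N.CommonAncestor Y v) (hvu : N.below v u) : v = u :=
  by_contra fun hne => hu.2 v hv ⟨hvu, hne⟩

end PhyloNetwork

/-- Choose a root-to-leaf path through `u` to a taxon of `Y`: the stable ancestor `w` lies on it,
hence is comparable with `u`, and it cannot lie strictly below the LCA `u` since it is itself a
common ancestor of `Y`. -/
theorem lca_below_lsa {V X : Type} [Fintype V] [Fintype X]
    (N : PhyloNetwork V X) (Y : Set X) (hY : Y.Nonempty)
    (w : V) (hw : N.IsLSA Y w) (u : V) (hu : N.IsLCA Y u) :
    N.below u w := by
  obtain ⟨x, hx⟩ := hY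
  obtain ⟨p, hp, hcomp⟩ := N.exists_isDipath_through (N.root_reaches u) (hu.1 hx)
  rcases hcomp w (hw.1 x hx p hp) with hwu | huw
  · exact hwu
  · rw [hu.eq_of_below hw.1.commonAncestor_s13 huw]
    exact .refl
end
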